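/- arXiv:2301.05730 — 14 statements merged into one kernel-verified Lean document; each statement's English description precedes it below -/
import Mathlib

section
/- Let C be a cartesian closed category. Let (f₀, f₁ : A ⇉ B) and (f₀', f₁' : A' ⇉ B') be reflexive parallel pairs in C admitting coequalizers c : B → Q and c' : B' → Q' respectively. Then c × c' : B × B' → Q × Q' is a coequalizer of the parallel pair (f₀ × f₀', f₁ × f₁' : A × A' ⇉ B × B'). In other words, reflexive coequalizers in a cartesian closed category commute with binary products. -/
/-!
Factor `c.π × c'.π` as `(c.π × 𝟙) ≫ (𝟙 × c'.π)`. Products with a fixed object are left adjoints,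
so each factor is a coequalizer of the corresponding one-sided pair. Precomposing with
`𝟙 × δ'` (resp. `δ × 𝟙`) turns `fᵢ × fᵢ'` into `fᵢ × 𝟙` (resp. `𝟙 × fᵢ'`), so a map coequalizing
the product pair descends through both stages.
-/

open CategoryTheory CategoryTheory.Limits

noncomputable section

namespace CategoryTheory.Limits

variable {C : Type*} [Category C] [HasBinaryProducts C]

def prodFunctorFlipObjIso (X : C) : prod.functor.flip.obj X ≅ prod.functor.obj X :=
  NatIso.ofComponents (fun Y => prod.braiding Y X) fun f => braid_natural f (𝟙 X)

instance {J : Type*} [Category J] [∀ X : C, PreservesColimitsOfShape J (prod.functor.obj X)]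
    (X : C) : PreservesColimitsOfShape J (prod.functor.flip.obj X) :=
  preservesColimitsOfShape_of_natIso (prodFunctorFlipObjIso X).symm

variable {A B A' B' : C} {f₀ f₁ : A ⟶ B} {f₀' f₁' : A' ⟶ B'}

abbrev Cofork.prodMap (c : Cofork f₀ f₁) (c' : Cofork f₀' f₁') :
    Cofork (prod.map f₀ f₀') (prod.map f₁ f₁') :=
  Cofork.ofπ (prod.map c.π c'.π) (by rw [prod.map_map, prod.map_map, c.condition, c'.condition])

def isColimitCoforkProdMapIdLeft (X : C)
    [PreservesColimit (parallelPair f₀ f₁) (prod.functor.obj X)]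
    {c : Cofork f₀ f₁} (hc : IsColimit c) :
    IsColimit (Cofork.ofπ (prod.map (𝟙 X) c.π) (by rw [prod.map_map, prod.map_map, c.condition]) :
      Cofork (prod.map (𝟙 X) f₀) (prod.map (𝟙 X) f₁)) :=
  isColimitCoforkMapOfIsColimit (prod.functor.obj X) c.condition (hc.ofIsoColimit c.isoCoforkOfπ)

def isColimitCoforkProdMapIdRight (X : C)
    [PreservesColimit (parallelPair f₀ f₁) (prod.functor.flip.obj X)]
    {c : Cofork f₀ f₁} (hc : IsColimit c) :
    IsColimit (Cofork.ofπ (prod.map c.π (𝟙 X)) (by rw [prod.map_map, prod.map_map, c.condition]) :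
      Cofork (prod.map f₀ (𝟙 X)) (prod.map f₁ (𝟙 X))) :=
  isColimitCoforkMapOfIsColimit (prod.functor.flip.obj X) c.condition
    (hc.ofIsoColimit c.isoCoforkOfπ)

section Reflexive

variable (s : Cofork (prod.map f₀ f₀') (prod.map f₁ f₁'))

theorem Cofork.condition_prodMap_id_right {δ' : B' ⟶ A'} (hδ₀' : δ' ≫ f₀' = 𝟙 B')
    (hδ₁' : δ' ≫ f₁' = 𝟙 B') : prod.map f₀ (𝟙 B') ≫ s.π = prod.map f₁ (𝟙 B') ≫ s.π := by
  have hsection (f : A ⟶ B) (f' : A' ⟶ B') (hf' : δ' ≫ f' = 𝟙 B') :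
      prod.map f (𝟙 B') = prod.map (𝟙 A) δ' ≫ prod.map f f' := by
    rw [prod.map_map, Category.id_comp, hf']
  rw [hsection f₀ f₀' hδ₀', hsection f₁ f₁' hδ₁', Category.assoc, Category.assoc, s.condition]

theorem Cofork.condition_prodMap_id_left {δ : B ⟶ A} (hδ₀ : δ ≫ f₀ = 𝟙 B)
    (hδ₁ : δ ≫ f₁ = 𝟙 B) : prod.map (𝟙 B) f₀' ≫ s.π = prod.map (𝟙 B) f₁' ≫ s.π := by
  have hsection (f : A ⟶ B) (f' : A' ⟶ B') (hf : δ ≫ f = 𝟙 B) :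
      prod.map (𝟙 B) f' = prod.map δ (𝟙 A') ≫ prod.map f f' := by
    rw [prod.map_map, Category.id_comp, hf]
  rw [hsection f₀ f₀' hδ₀, hsection f₁ f₁' hδ₁, Category.assoc, Category.assoc, s.condition]

end Reflexive

variable [∀ X : C, PreservesColimitsOfShape WalkingParallelPair (prod.functor.obj X)]

def isColimitCoforkProdMapOfReflexive {δ : B ⟶ A} (hδ₀ : δ ≫ f₀ = 𝟙 B) (hδ₁ : δ ≫ f₁ = 𝟙 B)
    {δ' : B' ⟶ A'} (hδ₀' : δ' ≫ f₀' = 𝟙 B') (hδ₁' : δ' ≫ f₁' = 𝟙 B')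
    {c : Cofork f₀ f₁} (hc : IsColimit c) {c' : Cofork f₀' f₁'} (hc' : IsColimit c') :
    IsColimit (c.prodMap c') :=
  let hc₁ := isColimitCoforkProdMapIdRight B' hc
  let hc₂ := isColimitCoforkProdMapIdLeft c.pt hc'
  have : Epi (prod.map c.π (𝟙 A')) := Cofork.IsColimit.epi (isColimitCoforkProdMapIdRight A' hc)
  have split : prod.map c.π c'.π = prod.map c.π (𝟙 B') ≫ prod.map (𝟙 c.pt) c'.π := by simp
  have : Epi (prod.map c.π c'.π) :=
    split ▸ epi_comp' (Cofork.IsColimit.epi hc₁) (Cofork.IsColimit.epi hc₂)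
  let desc₁ (s : Cofork (prod.map f₀ f₀') (prod.map f₁ f₁')) : c.pt ⨯ B' ⟶ s.pt :=
    Cofork.IsColimit.desc hc₁ s.π (s.condition_prodMap_id_right hδ₀' hδ₁')
  have fac₁ s : prod.map c.π (𝟙 B') ≫ desc₁ s = s.π := Cofork.IsColimit.π_desc' hc₁ _ _
  have condition₁ s : prod.map (𝟙 c.pt) f₀' ≫ desc₁ s = prod.map (𝟙 c.pt) f₁' ≫ desc₁ s := by
    have interchange (f' : A' ⟶ B') :
        prod.map c.π (𝟙 A') ≫ prod.map (𝟙 c.pt) f' ≫ desc₁ s = prod.map (𝟙 B) f' ≫ s.π := by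
      rw [← fac₁ s, prod.map_map_assoc, prod.map_map_assoc]
      simp only [Category.id_comp, Category.comp_id]
    rw [← cancel_epi (prod.map c.π (𝟙 A')), interchange, interchange]
    exact s.condition_prodMap_id_left hδ₀ hδ₁
  let desc (s : Cofork (prod.map f₀ f₀') (prod.map f₁ f₁')) : c.pt ⨯ c'.pt ⟶ s.pt :=
    Cofork.IsColimit.desc hc₂ (desc₁ s) (condition₁ s)
  have fac₂ s : prod.map (𝟙 c.pt) c'.π ≫ desc s = desc₁ s := Cofork.IsColimit.π_desc' hc₂ _ _
  have fac s : prod.map c.π c'.π ≫ desc s = s.π := by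
    rw [split, Category.assoc, fac₂, fac₁]
  Cofork.IsColimit.mk _ desc fac fun s m hm => by
    rw [← cancel_epi (prod.map c.π c'.π)]
    exact hm.trans (fac s).symm

end CategoryTheory.Limits

/-- In a cartesian closed category, reflexive coequalizers commute with binary products:
given reflexive parallel pairs `(f₀, f₁ : A ⇉ B)` (with common section `δ`) and
`(f₀', f₁' : A' ⇉ B')` (with common section `δ'`) admitting coequalizers `c : B ⟶ Q` and
`c' : B' ⟶ Q'`, the product morphism `prod.map c.π c'.π : A ⨯ A' ⟶ Q ⨯ Q'` is a coequalizer
of the parallel pair `(prod.map f₀ f₀', prod.map f₁ f₁')`. -/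
theorem reflexive_coequalizers_commute_with_binary_products
    {C : Type*} [Category C] [CartesianMonoidalCategory C] [MonoidalClosed C]
    {A B A' B' : C} (f₀ f₁ : A ⟶ B) (f₀' f₁' : A' ⟶ B')
    (δ : B ⟶ A) (hδ₀ : δ ≫ f₀ = 𝟙 B) (hδ₁ : δ ≫ f₁ = 𝟙 B)
    (δ' : B' ⟶ A') (hδ₀' : δ' ≫ f₀' = 𝟙 B') (hδ₁' : δ' ≫ f₁' = 𝟙 B')
    (c : Cofork f₀ f₁) (hc : IsColimit c)
    (c' : Cofork f₀' f₁') (hc' : IsColimit c') :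
    Nonempty (IsColimit (Cofork.ofπ (prod.map c.π c'.π)
      (show prod.map f₀ f₀' ≫ prod.map c.π c'.π = prod.map f₁ f₁' ≫ prod.map c.π c'.π by
        rw [prod.map_map, prod.map_map, c.condition, c'.condition]))) := by
  exact ⟨isColimitCoforkProdMapOfReflexive hδ₀ hδ₁ hδ₀' hδ₁' hc hc'⟩

end
end

section
/- Let K be a category with finite coproducts. If K has all small filtered colimits and coequalizers of reflexive pairs, then K has all small colimits (K is cocomplete). -/
open CategoryTheory CategoryTheory.Limits

universe v u

/-!
A parallel pair `f, g : A ⟶ B` has the same coequalizing morphisms as the reflexive pair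
`[f, 𝟙], [g, 𝟙] : A ⨿ B ⟶ B` (with common section `coprod.inr`), so reflexive coequalizers and
binary coproducts give all coequalizers. Arbitrary coproducts are filtered colimits of finite
ones, and coproducts together with coequalizers give all colimits.
-/

namespace CategoryTheory.Limits

section

variable {C : Type*} [Category C] {A B : C} (f g : A ⟶ B) [HasBinaryCoproduct A B]

theorem coprod_desc_id_comp_eq_iff {W : C} (π : B ⟶ W) :
    coprod.desc f (𝟙 B) ≫ π = coprod.desc g (𝟙 B) ≫ π ↔ f ≫ π = g ≫ π := by
  constructor
  · intro h
    simpa only [coprod.inl_desc_assoc] using coprod.inl ≫= h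
  · intro h
    ext <;> simp [h]

instance isReflexivePair_coprod_desc_id :
    IsReflexivePair (coprod.desc f (𝟙 B)) (coprod.desc g (𝟙 B)) :=
  IsReflexivePair.mk' coprod.inr (coprod.inr_desc _ _) (coprod.inr_desc _ _)

noncomputable def isColimitCoforkOfIsColimitCoprodDescId
    {c : Cofork (coprod.desc f (𝟙 B)) (coprod.desc g (𝟙 B))} (hc : IsColimit c) :
    IsColimit (Cofork.ofπ c.π ((coprod_desc_id_comp_eq_iff f g c.π).1 c.condition)) :=
  Cofork.IsColimit.mk' _ fun s =>
    let s' := Cofork.ofπ s.π ((coprod_desc_id_comp_eq_iff f g s.π).2 s.condition)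
    ⟨hc.desc s', hc.fac s' .one, fun hm => Cofork.IsColimit.hom_ext hc (hm.trans (hc.fac s' .one).symm)⟩

theorem hasCoequalizer_of_hasCoequalizer_coprod_desc_id
    [HasCoequalizer (coprod.desc f (𝟙 B)) (coprod.desc g (𝟙 B))] : HasCoequalizer f g :=
  HasColimit.mk ⟨_, isColimitCoforkOfIsColimitCoprodDescId f g (colimit.isColimit _)⟩

end

theorem hasCoequalizers_of_hasBinaryCoproducts_of_hasReflexiveCoequalizers (C : Type*)
    [Category C] [HasBinaryCoproducts C] [HasReflexiveCoequalizers C] : HasCoequalizers C :=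
  have : ∀ {A B : C} {f g : A ⟶ B}, HasCoequalizer f g :=
    hasCoequalizer_of_hasCoequalizer_coprod_desc_id _ _
  hasCoequalizers_of_hasColimit_parallelPair C

end CategoryTheory.Limits

/-- If a category `K` has finite coproducts, all small filtered colimits, and coequalizers of
reflexive pairs, then `K` has all small colimits, i.e. `K` is cocomplete. -/
theorem hasColimits_of_finite_coproducts_filtered_colimits_reflexive_coequalizers
    (K : Type u) [Category.{v} K] [HasFiniteCoproducts K]
    [HasFilteredColimitsOfSize.{v, v} K] [HasReflexiveCoequalizers K] :
    HasColimits K :=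
  have : HasCoproducts.{v} K := hasCoproducts_of_finite_and_filtered
  have := hasCoequalizers_of_hasBinaryCoproducts_of_hasReflexiveCoequalizers K
  has_colimits_of_hasCoequalizers_and_coproducts
end

section
/- Every pair of monotone maps f₀, f₁ : A → B between partial orders has a coinserter c : B → C, and this coinserter c is a surjective map. -/
/-!
The coinserter of `f₀, f₁ : A →o B` is `B` reordered by the preorder generated by its own order
and the pairs `f₀ a ≤ f₁ a`, made antisymmetric by identifying equivalent elements. A monotone `g`
with `g ∘ f₀ ≤ g ∘ f₁` is monotone for the generated preorder and, its target being a partial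
order, constant on equivalence classes; so it factors. The comparison map is a quotient map,
hence surjective, and surjectivity alone makes it order-epic.
-/

universe u

/-- `IsCoinserter f₀ f₁ c` says that the monotone map `c : B →o C` is a coinserter of the
parallel pair of monotone maps `f₀, f₁ : A →o B` in the category of partial orders and
monotone maps: `c ∘ f₀ ≤ c ∘ f₁` pointwise, every monotone map `g` with `g ∘ f₀ ≤ g ∘ f₁`
pointwise factors through `c`, and `c` is order-epic. -/
def IsCoinserter {A B C : Type u} [PartialOrder A] [PartialOrder B] [PartialOrder C]
    (f₀ f₁ : A →o B) (c : B →o C) : Prop :=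
  (∀ a, c (f₀ a) ≤ c (f₁ a)) ∧
  (∀ (D : Type u) (_ : PartialOrder D) (g : B →o D),
    (∀ a, g (f₀ a) ≤ g (f₁ a)) → ∃ h : C →o D, ∀ b, g b = h (c b)) ∧
  (∀ (D : Type u) (_ : PartialOrder D) (u₀ v₀ : C →o D),
    (∀ b, u₀ (c b) ≤ v₀ (c b)) → ∀ x, u₀ x ≤ v₀ x)

open Relation

/-- `α` ordered by the reflexive transitive closure of `r`. -/
def GeneratedPreorder {α : Type*} (_ : α → α → Prop) : Type _ := α

namespace GeneratedPreorder

variable {α : Type*} {r : α → α → Prop}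

instance : Preorder (GeneratedPreorder r) where
  le := ReflTransGen r
  le_refl _ := ReflTransGen.refl
  le_trans _ _ _ := ReflTransGen.trans

def of (r : α → α → Prop) : α → GeneratedPreorder r := id

theorem of_le_of {a b : α} (h : r a b) : of r a ≤ of r b := ReflTransGen.single h

theorem monotone_of_rel {β : Type*} [Preorder β] {g : α → β}
    (hg : ∀ a b, r a b → g a ≤ g b) : Monotone (α := GeneratedPreorder r) g := fun a b h => by
  simpa only [reflTransGen_eq_self] using ReflTransGen.lift g hg a b h

end GeneratedPreorder

section Antisymmetrization

variable {α D : Type*} [Preorder α] [PartialOrder D]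

theorem toAntisymmetrization_surjective :
    Function.Surjective (toAntisymmetrization (α := α) (· ≤ ·)) :=
  fun q => ⟨_, toAntisymmetrization_ofAntisymmetrization _ q⟩

def OrderHom.liftAntisymmetrization (g : α →o D) : Antisymmetrization α (· ≤ ·) →o D where
  toFun := Quotient.lift g fun _ _ h => le_antisymm (g.mono h.1) (g.mono h.2)
  monotone' x y := Quotient.inductionOn₂ x y fun _ _ h => g.mono h

end Antisymmetrization

section Coinserter

variable {A B : Type u} [PartialOrder A] [PartialOrder B] (f₀ f₁ : A →o B)

def coinserterRel (b b' : B) : Prop := b ≤ b' ∨ ∃ a, f₀ a = b ∧ f₁ a = b'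

abbrev Coinserter : Type u :=
  Antisymmetrization (GeneratedPreorder (coinserterRel f₀ f₁)) (· ≤ ·)

def coinserter : B →o Coinserter f₀ f₁ where
  toFun b := toAntisymmetrization _ (GeneratedPreorder.of _ b)
  monotone' _ _ h := toAntisymmetrization_mono (GeneratedPreorder.of_le_of (Or.inl h))

theorem coinserter_surjective : Function.Surjective (coinserter f₀ f₁) :=
  toAntisymmetrization_surjective

theorem coinserter_map_le (a : A) : coinserter f₀ f₁ (f₀ a) ≤ coinserter f₀ f₁ (f₁ a) :=
  toAntisymmetrization_mono (GeneratedPreorder.of_le_of (Or.inr ⟨a, rfl, rfl⟩))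

theorem exists_eq_comp_coinserter {D : Type*} [PartialOrder D] (g : B →o D)
    (hg : ∀ a, g (f₀ a) ≤ g (f₁ a)) :
    ∃ h : Coinserter f₀ f₁ →o D, ∀ b, g b = h (coinserter f₀ f₁ b) := by
  have hrel : ∀ b b', coinserterRel f₀ f₁ b b' → g b ≤ g b' := by
    rintro _ _ (hle | ⟨a, rfl, rfl⟩)
    exacts [g.mono hle, hg a]
  exact ⟨OrderHom.liftAntisymmetrization ⟨g, GeneratedPreorder.monotone_of_rel hrel⟩, fun _ => rfl⟩

theorem isCoinserter_coinserter : IsCoinserter f₀ f₁ (coinserter f₀ f₁) :=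
  ⟨coinserter_map_le f₀ f₁, fun _ _ g hg => exists_eq_comp_coinserter f₀ f₁ g hg,
    fun _ _ _ _ h => (coinserter_surjective f₀ f₁).forall.2 h⟩

end Coinserter

/-- Every parallel pair of monotone maps `f₀, f₁ : A →o B` between partial orders has a
coinserter `c : B →o C`, and this coinserter is a surjective map. -/
theorem exists_coinserter_surjective {A B : Type u} [PartialOrder A] [PartialOrder B]
    (f₀ f₁ : A →o B) :
    ∃ (C : Type u) (_ : PartialOrder C) (c : B →o C),
      IsCoinserter f₀ f₁ c ∧ Function.Surjective c :=
  ⟨Coinserter f₀ f₁, inferInstance, coinserter f₀ f₁, isCoinserter_coinserter f₀ f₁,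
    coinserter_surjective f₀ f₁⟩
end

section
/- Let (f₀, f₁ : A ⇉ B) and (f₀', f₁' : A' ⇉ B') be reflexive pairs of monotone maps between partial orders, with coinserters c : B → C and c' : B' → C' respectively. Then the componentwise product map c × c' : B × B' → C × C' (where products of posets carry the componentwise order) is a coinserter of the pair (f₀ × f₀', f₁ × f₁' : A × A' ⇉ B × B'). In other words, reflexive coinserters in the category of posets and monotone maps commute with binary products. -/
/-!
Currying does all the work. A monotone `g : B × B' → D` inverting the product pair curries to
`b ↦ g (b, -)`; reflexivity lets each variable be treated separately (set the other argument
to `δ' b'` or `δ b`), so each `g (b, -)` factors through `c'`, the factorizations form a monotone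
family because `c'` is order-epic, that family factors through `c`, and uncurrying gives the
factorization through `c × c'`. Order-epicness of `c × c'` is proved the same way.
-/

universe u

def IsOrderEpi {B C : Type u} [PartialOrder B] [PartialOrder C] (c : B →o C) : Prop :=
  ∀ (D : Type u) (_ : PartialOrder D) (u₀ v₀ : C →o D), u₀.comp c ≤ v₀.comp c → u₀ ≤ v₀

theorem IsOrderEpi.prodMap {B C B' C' : Type u} [PartialOrder B] [PartialOrder C]
    [PartialOrder B'] [PartialOrder C'] {c : B →o C} {c' : B' →o C'}
    (hc : IsOrderEpi c) (hc' : IsOrderEpi c') : IsOrderEpi (c.prodMap c') := by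
  intro D _ u₀ v₀ h
  have hcurry : OrderHom.curry u₀ ≤ OrderHom.curry v₀ :=
    hc _ _ _ _ fun b => hc' _ _ _ _ fun b' => h (b, b')
  exact fun p => hcurry p.1 p.2

namespace IsCoinserter

variable {A B C : Type u} [PartialOrder A] [PartialOrder B] [PartialOrder C]
  {f₀ f₁ : A →o B} {c : B →o C}

theorem isOrderEpi (hc : IsCoinserter f₀ f₁ c) : IsOrderEpi c :=
  fun D _ u₀ v₀ h => hc.2.2 D _ u₀ v₀ h

theorem exists_factor_curried {P D : Type u} [PartialOrder P] [PartialOrder D]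
    (hc : IsCoinserter f₀ f₁ c) (G : P →o B →o D) (hG : ∀ p a, G p (f₀ a) ≤ G p (f₁ a)) :
    ∃ H : P →o C →o D, ∀ p b, G p b = H p (c b) := by
  choose H hH using fun p => hc.2.1 D _ (G p) (hG p)
  refine ⟨⟨H, fun p q hpq => hc.isOrderEpi D _ _ _ fun b => ?_⟩, hH⟩
  simpa only [OrderHom.comp_coe, Function.comp_apply, hH] using G.mono hpq b

end IsCoinserter

/-- Reflexive coinserters in the category of posets and monotone maps commute with binary
products: if `(f₀, f₁ : A ⇉ B)` and `(f₀', f₁' : A' ⇉ B')` are reflexive pairs of monotone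
maps with coinserters `c : B →o C` and `c' : B' →o C'`, then the componentwise product map
`c × c' : B × B' →o C × C'` is a coinserter of `(f₀ × f₀', f₁ × f₁')`. -/
theorem reflexive_coinserters_commute_with_binary_products
    {A B C A' B' C' : Type u} [PartialOrder A] [PartialOrder B] [PartialOrder C]
    [PartialOrder A'] [PartialOrder B'] [PartialOrder C']
    (f₀ f₁ : A →o B) (f₀' f₁' : A' →o B')
    (δ : B →o A) (hδ₀ : ∀ b, f₀ (δ b) = b) (hδ₁ : ∀ b, f₁ (δ b) = b)
    (δ' : B' →o A') (hδ₀' : ∀ b, f₀' (δ' b) = b) (hδ₁' : ∀ b, f₁' (δ' b) = b)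
    (c : B →o C) (c' : B' →o C')
    (hc : IsCoinserter f₀ f₁ c) (hc' : IsCoinserter f₀' f₁' c') :
    IsCoinserter (f₀.prodMap f₀') (f₁.prodMap f₁') (c.prodMap c') := by
  refine ⟨fun a => ⟨hc.1 a.1, hc'.1 a.2⟩, fun D _ g hg => ?_,
    fun D _ u₀ v₀ h => hc.isOrderEpi.prodMap hc'.isOrderEpi D _ u₀ v₀ h⟩
  have hfst (a : A) (b' : B') : g (f₀ a, b') ≤ g (f₁ a, b') := by
    simpa [hδ₀', hδ₁'] using hg (a, δ' b')
  have hsnd (b : B) (a' : A') : g (b, f₀' a') ≤ g (b, f₁' a') := by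
    simpa [hδ₀, hδ₁] using hg (δ b, a')
  obtain ⟨H, hH⟩ := hc'.exists_factor_curried (OrderHom.curry g) hsnd
  obtain ⟨K, hK⟩ := hc.2.1 (C' →o D) _ H fun a =>
    hc'.isOrderEpi D _ _ _ fun b' => by simpa [← hH] using hfst a b'
  refine ⟨OrderHom.curry.symm K, fun ⟨b, b'⟩ => ?_⟩
  change OrderHom.curry g b b' = K (c b) (c' b')
  rw [hH, hK]
end

section
/- Let (f₀, f₁ : A ⇉ B) and (f₀', f₁' : A' ⇉ B') be reflexive pairs of continuous maps between ωcpos, with coinserters c : B → C and c' : B' → C' respectively (in the sense of ωcpos and continuous maps). Then the componentwise product map c × c' : B × B' → C × C' (where products of ωcpos carry the componentwise order, with componentwise suprema of ω-chains) is a coinserter of the pair (f₀ × f₀', f₁ × f₁' : A × A' ⇉ B × B'). In other words, reflexive coinserters of ωcpos commute with binary products. -/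
open OmegaCompletePartialOrder

universe u

/-- `IsOmegaCoinserter f₀ f₁ c` says that the (ω-Scott continuous) map `c : B → C` is a
coinserter of the parallel pair of continuous maps `f₀, f₁ : A → B` in the category of
ωcpos and continuous maps: `c ∘ f₀ ≤ c ∘ f₁` pointwise, every continuous map `g` into an
ωcpo with `g ∘ f₀ ≤ g ∘ f₁` pointwise factors through `c` via a continuous map, and `c` is
order-epic with respect to continuous maps. -/
def IsOmegaCoinserter {A B C : Type u}
    [OmegaCompletePartialOrder A] [OmegaCompletePartialOrder B] [OmegaCompletePartialOrder C]
    (f₀ f₁ : A → B) (c : B → C) : Prop :=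
  ωScottContinuous c ∧
  (∀ a, c (f₀ a) ≤ c (f₁ a)) ∧
  (∀ (D : Type u) (_ : OmegaCompletePartialOrder D) (g : B → D), ωScottContinuous g →
    (∀ a, g (f₀ a) ≤ g (f₁ a)) → ∃ h : C → D, ωScottContinuous h ∧ ∀ b, g b = h (c b)) ∧
  (∀ (D : Type u) (_ : OmegaCompletePartialOrder D) (u₀ v₀ : C → D),
    ωScottContinuous u₀ → ωScottContinuous v₀ →
    (∀ b, u₀ (c b) ≤ v₀ (c b)) → ∀ x, u₀ x ≤ v₀ x)


variable {α β γ : Type*} [OmegaCompletePartialOrder α] [OmegaCompletePartialOrder β]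
  [OmegaCompletePartialOrder γ]

lemma scottFst : ωScottContinuous (Prod.fst : α × β → α) :=
  ωScottContinuous.of_monotone_map_ωSup ⟨fun _ _ h => h.1, fun _ => rfl⟩

lemma scottSnd : ωScottContinuous (Prod.snd : α × β → β) :=
  ωScottContinuous.of_monotone_map_ωSup ⟨fun _ _ h => h.2, fun _ => rfl⟩

lemma scottPair {f : α → β} {g : α → γ} (hf : ωScottContinuous f) (hg : ωScottContinuous g) :
    ωScottContinuous fun x => (f x, g x) := by
  refine ωScottContinuous.of_monotone_map_ωSup
    ⟨fun _ _ h => ⟨hf.monotone h, hg.monotone h⟩, fun c => ?_⟩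
  exact Prod.ext (hf.map_ωSup c) (hg.map_ωSup c)

lemma scottSec1 {g : α × β → γ} (hg : ωScottContinuous g) (b : β) :
    ωScottContinuous fun a => g (a, b) :=
  hg.comp (scottPair ωScottContinuous.id ωScottContinuous.const)

lemma scottSec2 {g : α × β → γ} (hg : ωScottContinuous g) (a : α) :
    ωScottContinuous fun b => g (a, b) :=
  hg.comp (scottPair ωScottContinuous.const ωScottContinuous.id)

/-- curry -/
def myCurry {g : α × β → γ} (hg : ωScottContinuous g) (a : α) : β →𝒄 γ :=
  ⟨⟨fun b => g (a, b), fun _ _ h => hg.monotone ⟨le_rfl, h⟩⟩, (scottSec2 hg a).map_ωSup⟩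

lemma scottCurry {g : α × β → γ} (hg : ωScottContinuous g) :
    ωScottContinuous (myCurry hg) := by
  refine ωScottContinuous.of_monotone_map_ωSup ⟨fun x y h b => hg.monotone ⟨h, le_rfl⟩, fun c => ?_⟩
  apply ContinuousHom.ext
  intro b
  have : g (ωSup c, b) = ωSup (c.map ⟨fun a => g (a, b), fun _ _ h => hg.monotone ⟨h, le_rfl⟩⟩) :=
    (scottSec1 hg b).map_ωSup c
  show g (ωSup c, b) = _
  rw [this]
  rfl

lemma scottEval {f : α → β →𝒄 γ} (hf : ωScottContinuous f) :
    ωScottContinuous fun p : α × β => f p.1 p.2 :=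
  ContinuousHom.Prod.apply.ωScottContinuous.comp (scottPair (hf.comp scottFst) scottSnd)

/-- Reflexive coinserters of ωcpos commute with binary products: if `(f₀, f₁ : A ⇉ B)` and
`(f₀', f₁' : A' ⇉ B')` are reflexive pairs of continuous maps between ωcpos with coinserters
`c : B → C` and `c' : B' → C'`, then the componentwise product map
`Prod.map c c' : B × B' → C × C'` is a coinserter of `(Prod.map f₀ f₀', Prod.map f₁ f₁')`. -/
theorem reflexive_omega_coinserters_commute_with_binary_products
    {A B C A' B' C' : Type u}
    [OmegaCompletePartialOrder A] [OmegaCompletePartialOrder B] [OmegaCompletePartialOrder C]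
    [OmegaCompletePartialOrder A'] [OmegaCompletePartialOrder B'] [OmegaCompletePartialOrder C']
    (f₀ f₁ : A → B) (hf₀ : ωScottContinuous f₀) (hf₁ : ωScottContinuous f₁)
    (f₀' f₁' : A' → B') (hf₀' : ωScottContinuous f₀') (hf₁' : ωScottContinuous f₁')
    (δ : B → A) (hδ : ωScottContinuous δ)
    (hδ₀ : ∀ b, f₀ (δ b) = b) (hδ₁ : ∀ b, f₁ (δ b) = b)
    (δ' : B' → A') (hδ' : ωScottContinuous δ')
    (hδ₀' : ∀ b, f₀' (δ' b) = b) (hδ₁' : ∀ b, f₁' (δ' b) = b)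
    (c : B → C) (c' : B' → C')
    (hc : IsOmegaCoinserter f₀ f₁ c) (hc' : IsOmegaCoinserter f₀' f₁' c') :
    IsOmegaCoinserter (Prod.map f₀ f₀') (Prod.map f₁ f₁') (Prod.map c c') := by
  obtain ⟨hcc, hcle, hcfact, hcepi⟩ := hc
  obtain ⟨hcc', hcle', hcfact', hcepi'⟩ := hc'
  refine ⟨scottPair (hcc.comp scottFst) (hcc'.comp scottSnd), ?_, ?_, ?_⟩
  · rintro ⟨a, a'⟩
    exact ⟨hcle a, hcle' a'⟩
  · intro D instD g hg hgle
    -- curry in the first variable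
    have hGle : ∀ a, myCurry hg (f₀ a) ≤ myCurry hg (f₁ a) := by
      intro a b'
      show g (f₀ a, b') ≤ g (f₁ a, b')
      have := hgle (a, δ' b')
      simpa [Prod.map, hδ₀', hδ₁'] using this
    obtain ⟨H, hH, hHeq⟩ := hcfact (B' →𝒄 D) _ (myCurry hg) (scottCurry hg) hGle
    -- the uncurried factor, as a function on C × B'
    have hHe : ωScottContinuous fun p : C × B' => H p.1 p.2 := scottEval hH
    -- curry in the second variable
    have hG'cont : ωScottContinuous fun p : B' × C => H p.2 p.1 :=
      hHe.comp (scottPair scottSnd scottFst)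
    have hG'le : ∀ a', myCurry hG'cont (f₀' a') ≤ myCurry hG'cont (f₁' a') := by
      intro a' y
      show H y (f₀' a') ≤ H y (f₁' a')
      refine hcepi D _ (fun y => H y (f₀' a')) (fun y => H y (f₁' a'))
        (scottSec1 hHe _) (scottSec1 hHe _) ?_ y
      intro b
      have h1 : H (c b) (f₀' a') = g (b, f₀' a') := by
        have := hHeq b; exact (congrArg (fun F : B' →𝒄 D => F (f₀' a')) this).symm
      have h2 : H (c b) (f₁' a') = g (b, f₁' a') := by
        have := hHeq b; exact (congrArg (fun F : B' →𝒄 D => F (f₁' a')) this).symm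
      show H (c b) (f₀' a') ≤ H (c b) (f₁' a')
      rw [h1, h2]
      have := hgle (δ b, a')
      simpa [Prod.map, hδ₀, hδ₁] using this
    obtain ⟨H', hH', hH'eq⟩ := hcfact' (C →𝒄 D) _ (myCurry hG'cont) (scottCurry hG'cont) hG'le
    refine ⟨fun p => H' p.2 p.1, (scottEval hH').comp (scottPair scottSnd scottFst), ?_⟩
    rintro ⟨b, b'⟩
    show g (b, b') = H' (c' b') (c b)
    have e1 : g (b, b') = H (c b) b' := congrArg (fun F : B' →𝒄 D => F b') (hHeq b)
    have e2 : H (c b) b' = H' (c' b') (c b) :=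
      congrArg (fun F : C →𝒄 D => F (c b)) (hH'eq b')
    rw [e1, e2]
  · intro D instD u₀ v₀ hu hv hle
    rintro ⟨y, y'⟩
    have step1 : ∀ b' : B', ∀ y : C, u₀ (y, c' b') ≤ v₀ (y, c' b') := by
      intro b'
      refine hcepi D _ (fun y => u₀ (y, c' b')) (fun y => v₀ (y, c' b'))
        (scottSec1 hu _) (scottSec1 hv _) ?_
      intro b
      exact hle (b, b')
    refine hcepi' D _ (fun y' => u₀ (y, y')) (fun y' => v₀ (y, y'))
      (scottSec2 hu _) (scottSec2 hv _) ?_ y'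
    intro b'
    exact step1 b' y
end

section
/- Let (f₀, f₁ : A ⇉ B) and (f₀', f₁' : A' ⇉ B') be reflexive pairs of Scott-continuous maps between dcpos, with coinserters c : B → C and c' : B' → C' respectively (in the sense of dcpos and Scott-continuous maps). Then the componentwise product map c × c' : B × B' → C × C' (where products of dcpos carry the componentwise order) is a coinserter of the pair (f₀ × f₀', f₁ × f₁' : A × A' ⇉ B × B'). In other words, reflexive coinserters of dcpos commute with binary products. -/
universe u

/-- A partial order is a dcpo if every nonempty directed subset has a least upper bound. -/
def IsDcpo (α : Type u) [PartialOrder α] : Prop :=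
  ∀ d : Set α, d.Nonempty → DirectedOn (· ≤ ·) d → ∃ a, IsLUB d a

/-- `IsDcpoCoinserter f₀ f₁ c` says that the Scott-continuous map `c : B → C` is a coinserter
of the parallel pair of Scott-continuous maps `f₀, f₁ : A → B` in the category of dcpos and
Scott-continuous maps: `c ∘ f₀ ≤ c ∘ f₁` pointwise, every Scott-continuous map `g` into a
dcpo with `g ∘ f₀ ≤ g ∘ f₁` pointwise factors through `c` via a Scott-continuous map, and
`c` is order-epic with respect to Scott-continuous maps into dcpos. -/
def IsDcpoCoinserter {A B C : Type u} [PartialOrder A] [PartialOrder B] [PartialOrder C]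
    (f₀ f₁ : A → B) (c : B → C) : Prop :=
  ScottContinuous c ∧
  (∀ a, c (f₀ a) ≤ c (f₁ a)) ∧
  (∀ (D : Type u) (_ : PartialOrder D), IsDcpo D → ∀ g : B → D, ScottContinuous g →
    (∀ a, g (f₀ a) ≤ g (f₁ a)) → ∃ h : C → D, ScottContinuous h ∧ ∀ b, g b = h (c b)) ∧
  (∀ (D : Type u) (_ : PartialOrder D), IsDcpo D → ∀ u₀ v₀ : C → D,
    ScottContinuous u₀ → ScottContinuous v₀ →
    (∀ b, u₀ (c b) ≤ v₀ (c b)) → ∀ x, u₀ x ≤ v₀ x)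

section Helpers

variable {α β γ : Type u} [PartialOrder α] [PartialOrder β] [PartialOrder γ]

lemma dirImage {f : α → β} (hf : Monotone f) {d : Set α} (hd : DirectedOn (· ≤ ·) d) :
    DirectedOn (· ≤ ·) (f '' d) :=
  directedOn_image.2 <| hd.mono fun _ _ hab => hf hab

lemma isLUB_const {d : Set α} (hne : d.Nonempty) (x : β) :
    IsLUB ((fun _ : α => x) '' d) x := by
  constructor
  · rintro y ⟨z, hz, rfl⟩; exact le_rfl
  · intro y hy
    obtain ⟨z, hz⟩ := hne
    exact hy ⟨z, hz, rfl⟩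

/-- Joint Scott continuity implies Scott continuity in the first variable. -/
lemma scottFst_s7 {g : α × β → γ} (hg : ScottContinuous g) (b : β) :
    ScottContinuous fun a => g (a, b) := by
  intro d hne hdir a ha
  have hmono : Monotone (fun a : α => (a, b)) := fun x y hxy => Prod.mk_le_mk.2 ⟨hxy, le_rfl⟩
  have hlub : IsLUB ((fun a : α => (a, b)) '' d) (a, b) := by
    rw [isLUB_prod]
    refine ⟨?_, ?_⟩
    · rw [Set.image_image]; simpa using ha
    · rw [Set.image_image]; exact isLUB_const hne b
  have := hg (hne.image _) (dirImage hmono hdir) hlub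
  rwa [Set.image_image] at this

/-- Joint Scott continuity implies Scott continuity in the second variable. -/
lemma scottSnd_s7 {g : α × β → γ} (hg : ScottContinuous g) (a : α) :
    ScottContinuous fun b => g (a, b) := by
  intro d hne hdir b hb
  have hmono : Monotone (fun b : β => (a, b)) := fun x y hxy => Prod.mk_le_mk.2 ⟨le_rfl, hxy⟩
  have hlub : IsLUB ((fun b : β => (a, b)) '' d) (a, b) := by
    rw [isLUB_prod]
    refine ⟨?_, ?_⟩
    · rw [Set.image_image]; exact isLUB_const hne a
    · rw [Set.image_image]; simpa using hb
  have := hg (hne.image _) (dirImage hmono hdir) hlub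
  rwa [Set.image_image] at this

/-- Separate Scott continuity plus monotonicity implies joint Scott continuity. -/
lemma scottJoint {g : α × β → γ} (hmono : Monotone g)
    (h1 : ∀ b, ScottContinuous fun a => g (a, b))
    (h2 : ∀ a, ScottContinuous fun b => g (a, b)) : ScottContinuous g := by
  intro d hne hdir p hp
  rw [isLUB_prod] at hp
  obtain ⟨hp1, hp2⟩ := hp
  constructor
  · rintro x ⟨q, hq, rfl⟩
    exact hmono (Prod.le_def.2 ⟨hp1.1 ⟨q, hq, rfl⟩, hp2.1 ⟨q, hq, rfl⟩⟩)
  · intro u hu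
    have key : ∀ x ∈ Prod.fst '' d, ∀ y ∈ Prod.snd '' d, g (x, y) ≤ u := by
      rintro x ⟨⟨x1, y1⟩, hq1, rfl⟩ y ⟨⟨x2, y2⟩, hq2, rfl⟩
      obtain ⟨⟨x3, y3⟩, hq3, h13, h23⟩ := hdir _ hq1 _ hq2
      refine le_trans (hmono (Prod.mk_le_mk.2 ⟨?_, ?_⟩)) (hu ⟨_, hq3, rfl⟩)
      · exact (Prod.le_def.1 h13).1
      · exact (Prod.le_def.1 h23).2
    have step1 : ∀ x ∈ Prod.fst '' d, g (x, p.2) ≤ u := by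
      intro x hx
      have := h2 x (hne.image _) (dirImage monotone_snd hdir) hp2
      refine this.2 ?_
      rintro z ⟨y, hy, rfl⟩
      exact key x hx y hy
    have := h1 p.2 (hne.image _) (dirImage monotone_fst hdir) hp1
    refine this.2 ?_
    rintro z ⟨x, hx, rfl⟩
    exact step1 x hx

lemma scottProdMap {δ : Type u} [PartialOrder δ] {c : α → γ} {c' : β → δ}
    (hc : ScottContinuous c) (hc' : ScottContinuous c') :
    ScottContinuous (Prod.map c c') := by
  refine scottJoint (fun p q hpq =>
    Prod.mk_le_mk.2 ⟨hc.monotone (Prod.le_def.1 hpq).1, hc'.monotone (Prod.le_def.1 hpq).2⟩)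
    ?_ ?_
  · intro b d hne hdir a ha
    rw [isLUB_prod]
    refine ⟨?_, ?_⟩
    · rw [Set.image_image]; simpa [Set.image_image] using hc hne hdir ha
    · rw [Set.image_image]; exact isLUB_const hne _
  · intro a d hne hdir b hb
    rw [isLUB_prod]
    refine ⟨?_, ?_⟩
    · rw [Set.image_image]; exact isLUB_const hne _
    · rw [Set.image_image]; simpa [Set.image_image] using hc' hne hdir hb

end Helpers

section FnSpace

set_option linter.unusedSectionVars false

variable {α β γ : Type u} [PartialOrder α] [PartialOrder β] [PartialOrder γ]

/-- A nonempty directed set of Scott-continuous functions into a dcpo has a pointwise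
supremum which is Scott continuous, is a LUB in the function order, and is a pointwise LUB. -/
lemma supScott (hγ : IsDcpo γ) {S : Set (α → γ)} (hne : S.Nonempty)
    (hdir : DirectedOn (· ≤ ·) S) (hcont : ∀ f ∈ S, ScottContinuous f) :
    ∃ F : α → γ, ScottContinuous F ∧ IsLUB S F ∧ ∀ a, IsLUB ((fun f => f a) '' S) (F a) := by
  have hSa : ∀ a : α, ∃ x, IsLUB ((fun f => f a) '' S) x := by
    intro a
    exact hγ _ (hne.image _)
      (dirImage (f := fun f : α → γ => f a) (fun f g hfg => Pi.le_def.1 hfg a) hdir)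
  choose F hF using hSa
  have hmonoF : Monotone F := by
    intro a b hab
    refine (hF a).2 ?_
    rintro x ⟨f, hf, rfl⟩
    exact le_trans ((hcont f hf).monotone hab) ((hF b).1 ⟨f, hf, rfl⟩)
  have hlubS : IsLUB S F := by
    constructor
    · intro f hf a
      exact (hF a).1 ⟨f, hf, rfl⟩
    · intro g hg a
      refine (hF a).2 ?_
      rintro x ⟨f, hf, rfl⟩
      exact hg hf a
  refine ⟨F, ?_, hlubS, hF⟩
  intro d hned hdird a ha
  constructor
  · rintro x ⟨b, hb, rfl⟩
    exact hmonoF (ha.1 hb)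
  · intro u hu
    refine (hF a).2 ?_
    rintro x ⟨f, hf, rfl⟩
    have := hcont f hf hned hdird ha
    refine this.2 ?_
    rintro y ⟨b, hb, rfl⟩
    exact le_trans ((hF b).1 ⟨f, hf, rfl⟩) (hu ⟨b, hb, rfl⟩)

/-- The Scott-continuous function space into a dcpo is a dcpo. -/
lemma isDcpo_SC (hγ : IsDcpo γ) : IsDcpo {f : α → γ // ScottContinuous f} := by
  intro d hne hdir
  obtain ⟨F, hFcont, hFlub, _⟩ := supScott hγ (S := Subtype.val '' d) (hne.image _)
    (dirImage (f := (Subtype.val : {f : α → γ // ScottContinuous f} → (α → γ))) (fun f g hfg => Subtype.coe_le_coe.2 hfg) hdir) (by rintro f ⟨g, hg, rfl⟩; exact g.2)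
  refine ⟨⟨F, hFcont⟩, ?_, ?_⟩
  · rintro g hg
    exact hFlub.1 ⟨g, hg, rfl⟩
  · intro g hg
    show F ≤ g.1
    refine hFlub.2 ?_
    rintro f ⟨f', hf', rfl⟩
    exact hg hf'

/-- Evaluation of a Scott-continuous map into the continuous function space is
Scott continuous in the first argument. -/
lemma evalScott (hγ : IsDcpo γ) {h : α → {f : β → γ // ScottContinuous f}}
    (hh : ScottContinuous h) (b : β) :
    ScottContinuous fun a => (h a).1 b := by
  intro d hne hdir a ha
  have hlubh := hh hne hdir ha
  constructor
  · rintro x ⟨p, hp, rfl⟩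
    exact (hh.monotone (ha.1 hp)) b
  · intro u hu
    obtain ⟨F, hFcont, hFlub, hFpt⟩ := supScott hγ (S := (fun p => (h p).1) '' d)
      (hne.image _) (dirImage (f := fun p => (h p).1) (fun p q hpq => hh.monotone hpq) hdir)
      (by rintro f ⟨p, hp, rfl⟩; exact (h p).2)
    have hub : (⟨F, hFcont⟩ : {f : β → γ // ScottContinuous f}) ∈ upperBounds (h '' d) := by
      rintro g ⟨p, hp, rfl⟩
      exact hFlub.1 ⟨p, hp, rfl⟩
    have h1 : (h a).1 b ≤ F b := (hlubh.2 hub) b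
    refine le_trans h1 ((hFpt b).2 ?_)
    rintro x ⟨f, ⟨p, hp, rfl⟩, rfl⟩
    exact hu ⟨p, hp, rfl⟩

/-- Currying a jointly Scott-continuous map yields a Scott-continuous map into the
continuous function space. -/
lemma curryScott {g : α × β → γ} (hg : ScottContinuous g) :
    ScottContinuous (fun a => (⟨fun b => g (a, b), scottSnd_s7 hg a⟩ :
      {f : β → γ // ScottContinuous f})) := by
  intro d hne hdir a ha
  constructor
  · rintro x ⟨p, hp, rfl⟩
    intro b
    exact hg.monotone (Prod.mk_le_mk.2 ⟨ha.1 hp, le_rfl⟩)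
  · rintro G hG
    intro b
    have := scottFst_s7 hg b hne hdir ha
    refine this.2 ?_
    rintro x ⟨p, hp, rfl⟩
    exact hG ⟨p, hp, rfl⟩ b

end FnSpace

/-- Reflexive coinserters of dcpos commute with binary products: if `(f₀, f₁ : A ⇉ B)` and
`(f₀', f₁' : A' ⇉ B')` are reflexive pairs of Scott-continuous maps between dcpos with
coinserters `c : B → C` and `c' : B' → C'`, then the componentwise product map
`Prod.map c c' : B × B' → C × C'` (with the componentwise order on products) is a coinserter
of `(Prod.map f₀ f₀', Prod.map f₁ f₁')`. -/
theorem reflexive_dcpo_coinserters_commute_with_binary_products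
    {A B C A' B' C' : Type u} [PartialOrder A] [PartialOrder B] [PartialOrder C]
    [PartialOrder A'] [PartialOrder B'] [PartialOrder C']
    (hA : IsDcpo A) (hB : IsDcpo B) (hC : IsDcpo C)
    (hA' : IsDcpo A') (hB' : IsDcpo B') (hC' : IsDcpo C')
    (f₀ f₁ : A → B) (hf₀ : ScottContinuous f₀) (hf₁ : ScottContinuous f₁)
    (f₀' f₁' : A' → B') (hf₀' : ScottContinuous f₀') (hf₁' : ScottContinuous f₁')
    (δ : B → A) (hδ : ScottContinuous δ)
    (hδ₀ : ∀ b, f₀ (δ b) = b) (hδ₁ : ∀ b, f₁ (δ b) = b)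
    (δ' : B' → A') (hδ' : ScottContinuous δ')
    (hδ₀' : ∀ b, f₀' (δ' b) = b) (hδ₁' : ∀ b, f₁' (δ' b) = b)
    (c : B → C) (c' : B' → C')
    (hc : IsDcpoCoinserter f₀ f₁ c) (hc' : IsDcpoCoinserter f₀' f₁' c') :
    IsDcpoCoinserter (Prod.map f₀ f₀') (Prod.map f₁ f₁') (Prod.map c c') := by
  obtain ⟨hccont, hcle, hcfact, hcepi⟩ := hc
  obtain ⟨hccont', hcle', hcfact', hcepi'⟩ := hc'
  refine ⟨scottProdMap hccont hccont', ?_, ?_, ?_⟩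
  · rintro ⟨a, a'⟩
    exact Prod.mk_le_mk.2 ⟨hcle a, hcle' a'⟩
  · -- factorization
    intro D instD hD g hg hgle
    letI := instD
    -- curry g into the continuous function space SC' = {f : B' → D // ScottContinuous f}
    have hgcurry := curryScott hg
    have hle1 : ∀ a, (⟨fun b' => g (f₀ a, b'), scottSnd_s7 hg (f₀ a)⟩ :
        {f : B' → D // ScottContinuous f}) ≤ ⟨fun b' => g (f₁ a, b'), scottSnd_s7 hg (f₁ a)⟩ := by
      intro a
      refine Subtype.mk_le_mk.2 ?_
      intro b'
      show g (f₀ a, b') ≤ g (f₁ a, b')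
      have h0 : g (f₀ a, b') = g (Prod.map f₀ f₀' (a, δ' b')) := by
        simp [Prod.map, hδ₀']
      have h1 : g (Prod.map f₁ f₁' (a, δ' b')) = g (f₁ a, b') := by
        simp [Prod.map, hδ₁']
      rw [h0, ← h1]
      exact hgle (a, δ' b')
    obtain ⟨hh, hhhcont, hhheq⟩ := hcfact {f : B' → D // ScottContinuous f} inferInstance
      (isDcpo_SC hD) _ hgcurry hle1
    -- H : C × B' → D
    set H : C × B' → D := fun p => (hh p.1).1 p.2 with hH
    have hHeq : ∀ b b', H (c b, b') = g (b, b') := by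
      intro b b'
      have := congrArg Subtype.val (hhheq b)
      exact (congrFun this b').symm
    have hHmono : Monotone H := by
      rintro ⟨x, y⟩ ⟨x', y'⟩ hpq
      calc (hh x).1 y ≤ (hh x').1 y := (hhhcont.monotone (Prod.le_def.1 hpq).1) y
        _ ≤ (hh x').1 y' := (hh x').2.monotone (Prod.le_def.1 hpq).2
    have hH1 : ∀ b', ScottContinuous fun x => H (x, b') := fun b' => evalScott hD hhhcont b'
    have hH2 : ∀ x, ScottContinuous fun b' => H (x, b') := fun x => (hh x).2
    have hHcont : ScottContinuous H := scottJoint hHmono hH1 hH2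
    -- H coequalizes id × f₀' ≤ id × f₁'
    have hHle : ∀ x a', H (x, f₀' a') ≤ H (x, f₁' a') := by
      intro x a'
      refine hcepi D instD hD (fun x => H (x, f₀' a')) (fun x => H (x, f₁' a'))
        (hH1 (f₀' a')) (hH1 (f₁' a')) ?_ x
      intro b
      show H (c b, f₀' a') ≤ H (c b, f₁' a')
      rw [hHeq, hHeq]
      have h0 : g (b, f₀' a') = g (Prod.map f₀ f₀' (δ b, a')) := by
        simp [Prod.map, hδ₀]
      have h1 : g (Prod.map f₁ f₁' (δ b, a')) = g (b, f₁' a') := by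
        simp [Prod.map, hδ₁]
      rw [h0, ← h1]
      exact hgle (δ b, a')
    -- second stage: curry H in the other direction
    have hswapcont : ScottContinuous (fun p : B' × C => H (p.2, p.1)) := by
      refine scottJoint (fun p q hpq => hHmono
        (Prod.mk_le_mk.2 ⟨(Prod.le_def.1 hpq).2, (Prod.le_def.1 hpq).1⟩)) ?_ ?_
      · intro x
        exact hH2 x
      · intro b'
        exact hH1 b'
    have hHcurry := curryScott hswapcont
    have hle2 : ∀ a', (⟨fun x => H (x, f₀' a'), scottSnd_s7 hswapcont (f₀' a')⟩ :
        {f : C → D // ScottContinuous f}) ≤ ⟨fun x => H (x, f₁' a'), scottSnd_s7 hswapcont (f₁' a')⟩ := by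
      intro a'
      exact Subtype.mk_le_mk.2 fun x => hHle x a'
    obtain ⟨kk, hkkcont, hkkeq⟩ := hcfact' {f : C → D // ScottContinuous f} inferInstance
      (isDcpo_SC hD) _ hHcurry hle2
    refine ⟨fun p => (kk p.2).1 p.1, ?_, ?_⟩
    · refine scottJoint ?_ ?_ ?_
      · rintro ⟨x, y⟩ ⟨x', y'⟩ hpq
        calc (kk y).1 x ≤ (kk y').1 x := (hkkcont.monotone (Prod.le_def.1 hpq).2) x
          _ ≤ (kk y').1 x' := (kk y').2.monotone (Prod.le_def.1 hpq).1
      · intro y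
        exact (kk y).2
      · intro x
        exact evalScott hD hkkcont x
    · rintro ⟨b, b'⟩
      show g (b, b') = (kk (c' b')).1 (c b)
      rw [← hHeq b b']
      exact congrFun (congrArg Subtype.val (hkkeq b')) (c b)
  · -- order-epi
    intro D instD hD u v hu hv hle x
    letI := instD
    obtain ⟨x1, x2⟩ := x
    have step1 : ∀ b' x1, u (x1, c' b') ≤ v (x1, c' b') := by
      intro b' x1
      refine hcepi D instD hD (fun x => u (x, c' b')) (fun x => v (x, c' b'))
        (scottFst_s7 hu (c' b')) (scottFst_s7 hv (c' b')) ?_ x1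
      intro b
      exact hle (b, b')
    refine hcepi' D instD hD (fun y => u (x1, y)) (fun y => v (x1, y))
      (scottSnd_s7 hu x1) (scottSnd_s7 hv x1) ?_ x2
    intro b'
    exact step1 b' x1
end

section
/- Let A, A', B' be ωcpos, let B ⊆ B' be a sub-ωcpo with inclusion map m : B → B', let e : A → A' be a continuous map whose image is ω-dense in A', and let u : A → B and u' : A' → B' be continuous maps with m ∘ u = u' ∘ e. Then there exists a unique continuous map d : A' → B with d ∘ e = u and m ∘ d = u'. (Diagonal fill-in for the factorization system on ωcpos whose left class consists of continuous maps with ω-dense image and whose right class consists of sub-ωcpo inclusions.) -/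
open OmegaCompletePartialOrder

universe u

/-- A subset `S` of an ωcpo `P` is a sub-ωcpo if it is closed under suprema of ω-chains
contained in it. -/
def IsSubOmegaCpo {P : Type u} [OmegaCompletePartialOrder P] (S : Set P) : Prop :=
  ∀ c : Chain P, (∀ i ∈ c, i ∈ S) → ωSup c ∈ S

/-- A subset `X` of an ωcpo `P` is ω-dense if the only sub-ωcpo of `P` containing `X` is `P`
itself. -/
def OmegaDense {P : Type u} [OmegaCompletePartialOrder P] (X : Set P) : Prop :=
  ∀ S : Set P, IsSubOmegaCpo S → X ⊆ S → S = Set.univ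

/-- Diagonal fill-in for the (ω-dense image, sub-ωcpo inclusion) factorization system on
ωcpos: given ωcpos `A`, `A'`, `P`, a sub-ωcpo `S ⊆ P` (with the induced ωcpo structure and
inclusion map `Subtype.val : ↥S → P`), a continuous map `e : A → A'` with ω-dense image, and
continuous maps `u : A → ↥S` and `u' : A' → P` with `Subtype.val ∘ u = u' ∘ e`, there exists
a unique continuous map `d : A' → ↥S` with `d ∘ e = u` and `Subtype.val ∘ d = u'`. -/
theorem omega_dense_sub_cpo_diagonal_fill_in
    {A A' P : Type u} [OmegaCompletePartialOrder A] [OmegaCompletePartialOrder A']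
    [OmegaCompletePartialOrder P]
    (S : Set P) (hS : IsSubOmegaCpo S)
    (e : A → A') (he : ωScottContinuous e) (hdense : OmegaDense (Set.range e))
    (u' : A' → P) (hu' : ωScottContinuous u') :
    letI : OmegaCompletePartialOrder ↥S := OmegaCompletePartialOrder.subtype (· ∈ S) hS
    ∀ u : A → ↥S, ωScottContinuous u → (∀ a, (u a : P) = u' (e a)) →
      ∃! d : A' → ↥S, ωScottContinuous d ∧ (∀ a, d (e a) = u a) ∧ (∀ x, (d x : P) = u' x) := by
  letI : OmegaCompletePartialOrder ↥S := OmegaCompletePartialOrder.subtype (· ∈ S) hS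
  intro u hu hcomm
  -- The set of points of A' whose image under u' lies in S is a sub-ωcpo containing range e
  have hT : ∀ x : A', u' x ∈ S := by
    have := hdense {x : A' | u' x ∈ S} ?_ ?_
    · intro x; exact Set.eq_univ_iff_forall.mp this x
    · intro c hc
      show u' (ωSup c) ∈ S
      rw [hu'.map_ωSup c]
      apply hS
      rintro p ⟨n, hn⟩
      exact hn ▸ hc (c n) ⟨n, rfl⟩
    · rintro x ⟨a, rfl⟩
      show u' (e a) ∈ S
      rw [← hcomm a]
      exact (u a).2
  refine ⟨fun x => ⟨u' x, hT x⟩, ⟨?_, ?_, fun x => rfl⟩, ?_⟩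
  · -- continuity
    have hmono : Monotone (fun x : A' => (⟨u' x, hT x⟩ : ↥S)) := by
      intro x y hxy
      exact (hu'.monotone hxy : u' x ≤ u' y)
    apply ωScottContinuous.of_monotone_map_ωSup
    refine ⟨hmono, fun c => ?_⟩
    apply Subtype.ext
    show u' (ωSup c) = _
    rw [hu'.map_ωSup c]
    rfl
  · intro a
    apply Subtype.ext
    exact (hcomm a).symm
  · rintro d ⟨hd, hde, hdv⟩
    funext x
    exact Subtype.ext (hdv x)
end

section
/- Let A, B, C be ωcpos, let f₀, f₁ : A → B be continuous maps, and let c : B → C be a coinserter of (f₀, f₁) in the sense of ωcpos and continuous maps. Then the image of c is ω-dense in C. -/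
open OmegaCompletePartialOrder

universe u

/-!
Let `S ⊆ C` be a sub-ωcpo containing the image of `c`. Then `S` is itself an ωcpo, and `c`
corestricts to a continuous map `B → S` that still satisfies the coinserter inequality, so it
factors as `h ∘ c` with `h : C → S` continuous. The maps `Subtype.val ∘ h` and `id` agree after
precomposition with `c`, hence they are equal by the two-dimensional part of the universal
property, and every point `x = (h x).val` of `C` lies in `S`.
-/

namespace IsSubOmegaCpo

variable {P : Type u} [OmegaCompletePartialOrder P] {S : Set P}

abbrev omegaCompletePartialOrder (hS : IsSubOmegaCpo S) : OmegaCompletePartialOrder S :=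
  OmegaCompletePartialOrder.subtype (· ∈ S) hS

theorem ωScottContinuous_val (hS : IsSubOmegaCpo S) :
    letI := hS.omegaCompletePartialOrder
    ωScottContinuous (Subtype.val : S → P) :=
  letI := hS.omegaCompletePartialOrder
  ωScottContinuous.of_monotone_map_ωSup ⟨fun _ _ h => h, fun _ => rfl⟩

theorem ωScottContinuous_codRestrict (hS : IsSubOmegaCpo S) {Q : Type*}
    [OmegaCompletePartialOrder Q] {f : Q → P} (hf : ωScottContinuous f) (hfS : ∀ x, f x ∈ S) :
    letI := hS.omegaCompletePartialOrder
    ωScottContinuous (Set.codRestrict f S hfS) :=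
  letI := hS.omegaCompletePartialOrder
  ωScottContinuous.of_monotone_map_ωSup
    ⟨fun _ _ h => hf.monotone h, fun c => Subtype.ext (hf.map_ωSup c)⟩

end IsSubOmegaCpo

namespace IsOmegaCoinserter

variable {A B C : Type u}
  [OmegaCompletePartialOrder A] [OmegaCompletePartialOrder B] [OmegaCompletePartialOrder C]
  {f₀ f₁ : A → B} {c : B → C}

theorem eq_of_comp_eq (hc : IsOmegaCoinserter f₀ f₁ c) {D : Type u}
    [OmegaCompletePartialOrder D] {u₀ v₀ : C → D} (hu : ωScottContinuous u₀)
    (hv : ωScottContinuous v₀) (h : ∀ b, u₀ (c b) = v₀ (c b)) : u₀ = v₀ :=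
  funext fun x => le_antisymm
    (hc.2.2.2 D _ u₀ v₀ hu hv (fun b => (h b).le) x)
    (hc.2.2.2 D _ v₀ u₀ hv hu (fun b => (h b).ge) x)

theorem eq_univ_of_range_subset (hc : IsOmegaCoinserter f₀ f₁ c) {S : Set C}
    (hS : IsSubOmegaCpo S) (hcS : Set.range c ⊆ S) : S = Set.univ := by
  let := hS.omegaCompletePartialOrder
  have hcS' : ∀ b, c b ∈ S := fun b => hcS ⟨b, rfl⟩
  obtain ⟨h, hh_cont, hh_fac⟩ := hc.2.2.1 S _ (Set.codRestrict c S hcS')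
    (hS.ωScottContinuous_codRestrict hc.1 hcS') hc.2.1
  have hval_h : (fun x => (h x).val) = fun x => x :=
    hc.eq_of_comp_eq (hS.ωScottContinuous_val.comp hh_cont) ωScottContinuous.id
      fun b => (congrArg Subtype.val (hh_fac b)).symm
  exact Set.eq_univ_of_forall fun x => congrFun hval_h x ▸ (h x).property

end IsOmegaCoinserter

theorem omega_coinserter_image_omegaDense_general {A B C : Type u}
    [OmegaCompletePartialOrder A] [OmegaCompletePartialOrder B] [OmegaCompletePartialOrder C]
    (f₀ f₁ : A → B) (c : B → C) (hc : IsOmegaCoinserter f₀ f₁ c) :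
    OmegaDense (Set.range c) :=
  fun _ hS hcS => hc.eq_univ_of_range_subset hS hcS

/-- Every coinserter `c : B → C` of a parallel pair of continuous maps `f₀, f₁ : A → B`
between ωcpos has ω-dense image. -/
theorem omega_coinserter_image_omegaDense {A B C : Type u}
    [OmegaCompletePartialOrder A] [OmegaCompletePartialOrder B] [OmegaCompletePartialOrder C]
    (f₀ f₁ : A → B) (hf₀ : ωScottContinuous f₀) (hf₁ : ωScottContinuous f₁)
    (c : B → C) (hc : IsOmegaCoinserter f₀ f₁ c) :
    OmegaDense (Set.range c) :=
  omega_coinserter_image_omegaDense_general f₀ f₁ c hc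
end

section
/- Let I be a directed partial order, let F be a functor from I to the category of ωcpos and continuous maps, and let (c_i : F(i) → C)_{i ∈ I} be a colimit cocone of F in this category. Then the union of the images ⋃_{i ∈ I} c_i[F(i)] is ω-dense in C. -/
open CategoryTheory OmegaCompletePartialOrder CategoryTheory.Limits

universe u

/-- For a colimit cocone `(c_i : F i → C)` of a directed diagram `F` in the category `ωCPO`
of ωcpos and continuous maps, the union of the images `⋃ i, c_i[F i]` is ω-dense in `C`. -/
theorem directed_colimit_union_of_images_omegaDense
    {I : Type u} [PartialOrder I] [Nonempty I] [IsDirected I (· ≤ ·)]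
    (F : I ⥤ ωCPO.{u}) (c : Cocone F) (hc : IsColimit c) :
    OmegaDense (P := ↥c.pt) (⋃ i : I, Set.range (c.ι.app i).toFun) := by
  intro S hS hX
  letI : OmegaCompletePartialOrder S :=
    OmegaCompletePartialOrder.subtype (· ∈ S) hS
  let ci : ∀ i : I, ↥(F.obj i) →𝒄 ↥c.pt := fun i => c.ι.app i
  have hmem : ∀ (i : I) (x : ↥(F.obj i)), ci i x ∈ S := fun i x =>
    hX (Set.mem_iUnion.mpr ⟨i, ⟨x, rfl⟩⟩)
  -- the inclusion of S into c.pt as a continuous map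
  let ι : ωCPO.of S ⟶ c.pt := ⟨OrderHom.Subtype.val (· ∈ S), fun _ => rfl⟩
  -- the factorization of each c.ι.app i through S
  let g : ∀ i : I, F.obj i ⟶ ωCPO.of S := fun i =>
    ⟨⟨fun x => ⟨ci i x, hmem i x⟩,
      fun a b hab => (ci i).monotone hab⟩,
      fun ch => Subtype.ext ((ci i).map_ωSup' ch)⟩
  let c' : Cocone F := ⟨ωCPO.of S, ⟨g, by
    intro i j f
    exact ContinuousHom.ext _ _ fun x =>
      Subtype.ext (ConcreteCategory.congr_hom (c.w f) x)⟩⟩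
  have hfac : ∀ i : I, c.ι.app i ≫ (hc.desc c' ≫ ι) = c.ι.app i := by
    intro i
    rw [← Category.assoc, hc.fac]
    rfl
  have hid : hc.desc c' ≫ ι = 𝟙 c.pt :=
    (hc.uniq c _ hfac).trans (hc.uniq c (𝟙 c.pt) (fun i => Category.comp_id _)).symm
  refine Set.eq_univ_of_forall fun x => ?_
  let d : ↥c.pt →𝒄 ↥(ωCPO.of S) := hc.desc c'
  have hx : Subtype.val (d x) = x := ConcreteCategory.congr_hom hid x
  rw [← hx]
  exact (d x).2
end

section
/- Let C be an ωcpo, let X ⊆ C be ω-dense, and let n ∈ ℕ. Then the set Xⁿ of all n-tuples with all coordinates in X is ω-dense in the product ωcpo Cⁿ (functions from an n-element set to C, with componentwise order and componentwise suprema of ω-chains). -/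
open OmegaCompletePartialOrder

universe u

/-!
Let `S` be a sub-ωcpo of `Πᵢ Pᵢ` containing `Πᵢ Xᵢ`. Freeing one coordinate `a` of a tuple `f`,
the values `x` with `update f a x ∈ S` form a sub-ωcpo of `P a`, since `update f a` is
ω-Scott continuous. If this set contains `X a`, density makes it everything, so `f ∈ S`.
Induction on the set of coordinates allowed to leave `X` then shows that every tuple lies in `S`.
-/

lemma ωScottContinuous_update {ι : Type*} [DecidableEq ι] {P : ι → Type*}
    [∀ i, OmegaCompletePartialOrder (P i)] (f : ∀ i, P i) (a : ι) :
    ωScottContinuous (Function.update f a) := by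
  refine ωScottContinuous.of_apply₂ fun j => ?_
  rcases eq_or_ne j a with rfl | hj
  · simp
  · simp [Function.update_of_ne hj]

lemma IsSubOmegaCpo.preimage {P Q : Type*} [OmegaCompletePartialOrder P]
    [OmegaCompletePartialOrder Q] {f : P → Q} (hf : ωScottContinuous f) {S : Set Q}
    (hS : IsSubOmegaCpo S) : IsSubOmegaCpo (f ⁻¹' S) := by
  intro c hc
  rw [Set.mem_preimage, hf.map_ωSup]
  exact hS _ fun _ ⟨i, hi⟩ => hi ▸ hc _ ⟨i, rfl⟩

lemma IsSubOmegaCpo.mem_of_forall_update_mem {ι : Type*} [DecidableEq ι] {P : ι → Type*}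
    [∀ i, OmegaCompletePartialOrder (P i)] {S : Set (∀ i, P i)} (hS : IsSubOmegaCpo S)
    {a : ι} {X : Set (P a)} (hX : OmegaDense X) {f : ∀ i, P i}
    (hf : ∀ x ∈ X, Function.update f a x ∈ S) : f ∈ S := by
  have hdense : Function.update f a ⁻¹' S = Set.univ :=
    hX _ (hS.preimage (ωScottContinuous_update f a)) hf
  have hfa : f a ∈ Function.update f a ⁻¹' S := hdense ▸ Set.mem_univ (f a)
  simpa using hfa

theorem omegaDense_pi {ι : Type*} [Finite ι] {P : ι → Type*}
    [∀ i, OmegaCompletePartialOrder (P i)] {X : ∀ i, Set (P i)} (hX : ∀ i, OmegaDense (X i)) :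
    OmegaDense {f : ∀ i, P i | ∀ i, f i ∈ X i} := by
  classical
  intro S hS hXS
  have := Fintype.ofFinite ι
  suffices ∀ s : Finset ι, ∀ f : ∀ i, P i, (∀ i ∉ s, f i ∈ X i) → f ∈ S from
    Set.eq_univ_of_forall fun f => this Finset.univ f (by simp)
  intro s
  induction s using Finset.induction_on with
  | empty => exact fun f hf => hXS fun i => hf i (Finset.notMem_empty i)
  | insert a s _ ih =>
    refine fun f hf => hS.mem_of_forall_update_mem (hX a) fun x hx => ih _ fun i hi => ?_
    rcases eq_or_ne i a with rfl | hia
    · simpa using hx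
    · simpa [Function.update_of_ne hia] using hf i (by simp [hia, hi])

/-- If `X` is an ω-dense subset of an ωcpo `C`, then for every `n : ℕ` the set `Xⁿ` of all
`n`-tuples with all coordinates in `X` is ω-dense in the power ωcpo `Cⁿ = (Fin n → C)`
(with componentwise order and componentwise suprema of ω-chains). -/
theorem omegaDense_pow {C : Type u} [OmegaCompletePartialOrder C] (X : Set C)
    (hX : OmegaDense X) (n : ℕ) :
    OmegaDense {f : Fin n → C | ∀ i, f i ∈ X} :=
  omegaDense_pi fun _ => hX
end

section
/- Let C be a dcpo, let X ⊆ C be dense, and let n ∈ ℕ. Then the set Xⁿ of all n-tuples with all coordinates in X is dense in the product dcpo Cⁿ (functions from an n-element set to C, with componentwise order and componentwise directed suprema). -/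
universe u

/-- A subset `S` of a partial order `P` is a sub-dcpo if whenever a nonempty directed subset
contained in `S` has a least upper bound in `P`, that least upper bound belongs to `S`. -/
def IsSubDcpo {P : Type u} [PartialOrder P] (S : Set P) : Prop :=
  ∀ d : Set P, d ⊆ S → d.Nonempty → DirectedOn (· ≤ ·) d → ∀ a, IsLUB d a → a ∈ S

/-- A subset `X` of a dcpo `P` is dense if the only sub-dcpo of `P` containing `X` is `P`
itself. -/
def DcpoDense {P : Type u} [PartialOrder P] (X : Set P) : Prop :=
  ∀ S : Set P, IsSubDcpo S → X ⊆ S → S = Set.univ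

/-- If `X` is a dense subset of a dcpo `C`, then for every `n : ℕ` the set `Xⁿ` of all
`n`-tuples with all coordinates in `X` is dense in the power dcpo `Cⁿ = (Fin n → C)`
(with componentwise order, in which directed suprema are computed componentwise). -/
theorem dcpoDense_pow {C : Type u} [PartialOrder C] (hC : IsDcpo C) (X : Set C)
    (hX : DcpoDense X) (n : ℕ) :
    DcpoDense {f : Fin n → C | ∀ i, f i ∈ X} := by
  intro S hS hXS
  have key : ∀ k : ℕ, ∀ f : Fin n → C, (∀ i : Fin n, k ≤ i.val → f i ∈ X) → f ∈ S := by
    intro k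
    induction k with
    | zero =>
      intro f hf
      exact hXS (fun i => hf i (Nat.zero_le _))
    | succ k ih =>
      intro f hf
      by_cases hk : k < n
      · set j : Fin n := ⟨k, hk⟩ with hj
        have hmono : ∀ c1 c2 : C, c1 ≤ c2 →
            Function.update f j c1 ≤ Function.update f j c2 := by
          intro c1 c2 h i
          by_cases hij : i = j
          · subst hij; simp [h]
          · simp [Function.update_of_ne hij]
        have hT : ∀ c ∈ X, Function.update f j c ∈ S := by
          intro c hc
          apply ih
          intro i hi
          by_cases hij : i = j
          · subst hij; simpa using hc
          · rw [Function.update_of_ne hij]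
            apply hf
            have : i.val ≠ k := fun h => hij (Fin.ext h)
            omega
        have hsub : IsSubDcpo {c : C | Function.update f j c ∈ S} := by
          intro d hd hne hdir a ha
          obtain ⟨c0, hc0⟩ := hne
          apply hS (Function.update f j '' d)
          · rintro _ ⟨c, hc, rfl⟩
            exact hd hc
          · exact ⟨_, Set.mem_image_of_mem _ hc0⟩
          · rintro _ ⟨c1, h1, rfl⟩ _ ⟨c2, h2, rfl⟩
            obtain ⟨c3, h3, l1, l2⟩ := hdir c1 h1 c2 h2
            exact ⟨_, ⟨c3, h3, rfl⟩, hmono _ _ l1, hmono _ _ l2⟩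
          · constructor
            · rintro _ ⟨c, hc, rfl⟩ i
              by_cases hij : i = j
              · subst hij; simpa using ha.1 hc
              · simp [Function.update_of_ne hij]
            · intro g hg i
              by_cases hij : i = j
              · subst hij
                simp only [Function.update_self]
                refine ha.2 fun c hc => ?_
                have := hg ⟨c, hc, rfl⟩ j
                simpa using this
              · rw [Function.update_of_ne hij]
                have := hg ⟨c0, hc0, rfl⟩ i
                rwa [Function.update_of_ne hij] at this
        have huniv := hX _ hsub (fun c hc => hT c hc)
        have h2 : f j ∈ {c : C | Function.update f j c ∈ S} := huniv ▸ Set.mem_univ _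
        simp only [Set.mem_setOf_eq, Function.update_eq_self] at h2
        exact h2
      · apply ih
        intro i hi
        have := i.isLt
        omega
  apply Set.eq_univ_of_forall
  intro f
  apply key n f
  intro i hi
  have := i.isLt
  omega
end

section
/- Let A and B be ωcpos and let e : A → B be a continuous map whose image is ω-dense in B. Then the cardinality of B is at most 2^{|A|}, where |A| is the cardinality of A. Consequently, every ωcpo has, up to isomorphism, only a set of quotients represented by continuous maps with ω-dense image. -/
open OmegaCompletePartialOrder

universe u

/-- If `e : A → B` is a continuous map of ωcpos whose image is ω-dense in `B`, then the
cardinality of `B` is at most `2 ^ |A|`.  (Consequently, every ωcpo has, up to isomorphism,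
only a set of quotients represented by continuous maps with ω-dense image.) -/
theorem card_le_of_omegaDense_image {A B : Type u}
    [OmegaCompletePartialOrder A] [OmegaCompletePartialOrder B]
    (e : A → B) (he : ωScottContinuous e) (hd : OmegaDense (Set.range e)) :
    Cardinal.mk B ≤ 2 ^ Cardinal.mk A := by
  -- Every element of `B` is the least upper bound of the image points below it.
  have hT : ({b : B | IsLUB (e '' {a | e a ≤ b}) b} : Set B) = Set.univ := by
    apply hd
    · intro c hc
      constructor
      · rintro _ ⟨a, ha, rfl⟩
        exact ha
      · intro u hu
        apply ωSup_le
        intro i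
        have hi : c i ∈ {b : B | IsLUB (e '' {a | e a ≤ b}) b} := hc (c i) ⟨i, rfl⟩
        refine hi.2 ?_
        rintro _ ⟨a, ha, rfl⟩
        exact hu ⟨a, le_trans ha (le_ωSup c i), rfl⟩
    · rintro _ ⟨a, rfl⟩
      constructor
      · rintro _ ⟨a', ha', rfl⟩
        exact ha'
      · intro u hu
        exact hu ⟨a, le_rfl, rfl⟩
  have hlub : ∀ b : B, IsLUB (e '' {a | e a ≤ b}) b := by
    intro b
    have : b ∈ ({b : B | IsLUB (e '' {a | e a ≤ b}) b} : Set B) := hT ▸ Set.mem_univ b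
    exact this
  have hinj : Function.Injective (fun b : B => ({a | e a ≤ b} : Set A)) := by
    intro b b' h
    have h1 := hlub b
    have h2 := hlub b'
    simp only at h
    rw [h] at h1
    exact h1.unique h2
  calc Cardinal.mk B ≤ Cardinal.mk (Set A) := Cardinal.mk_le_of_injective hinj
    _ = 2 ^ Cardinal.mk A := Cardinal.mk_set
end

section
/- Let P be an ωcpo, let r ∈ ℕ, and let p_i : ℕ⊤ → P be continuous maps for i = 1, …, r, where ℕ⊤ = ℕ ∪ {⊤} is the linearly ordered natural numbers with a top element adjoined. Then the union of the images ⋃_{i=1}^r p_i[ℕ⊤] is closed under suprema of ω-chains in P, i.e. it is a sub-ωcpo of P. -/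
open OmegaCompletePartialOrder

universe u

/-- Let `P` be an ωcpo, `r : ℕ`, and let `p i : ℕ∞ → P` be continuous maps for `i : Fin r`,
where `ℕ∞ = ℕ ∪ {⊤}` is the linearly ordered natural numbers with a top element adjoined.
Then the union of the images `⋃ i, p i [ℕ∞]` is closed under suprema of ω-chains in `P`,
i.e. it is a sub-ωcpo of `P`. -/
theorem union_of_images_of_natTop_isSubOmegaCpo {P : Type u} [OmegaCompletePartialOrder P]
    (r : ℕ) (p : Fin r → ℕ∞ → P) (hp : ∀ i, ωScottContinuous (p i)) :
    IsSubOmegaCpo (⋃ i : Fin r, Set.range (p i)) := by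
  intro c hc
  -- choose for each n an index f n with c n ∈ range (p (f n))
  have hc' : ∀ n : ℕ, ∃ i : Fin r, ∃ a : ℕ∞, p i a = c n := by
    intro n
    have := hc (c n) ⟨n, rfl⟩
    simpa [Set.mem_iUnion, Set.mem_range] using this
  choose f a ha using hc'
  -- pigeonhole: some fiber of f is infinite
  have : Nonempty (Fin r) := ⟨f 0⟩
  obtain ⟨i, hi⟩ := Finite.exists_infinite_fiber f
  have hinf : {n | f n = i}.Infinite := by
    rw [Set.infinite_coe_iff] at hi
    simpa [Set.preimage, Set.mem_singleton_iff] using hi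
  -- k enumerates the fiber monotonically
  set k : ℕ → ℕ := Nat.nth (f · = i) with hk
  have hkmono : StrictMono k := Nat.nth_strictMono hinf
  have hkmem : ∀ n, f (k n) = i := fun n => Nat.nth_mem_of_infinite hinf n
  -- build a monotone chain b in ℕ∞
  set b : ℕ → ℕ∞ := fun n => (Finset.range (n + 1)).sup (fun m => a (k m)) with hb
  have hbmono : Monotone b := fun m n hmn =>
    Finset.sup_mono (Finset.range_subset_range.2 (by omega))
  set bc : Chain ℕ∞ := ⟨b, hbmono⟩ with hbc
  have hmonopi : Monotone (p i) := (hp i).monotone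
  -- key: ωSup of (p i) ∘ b equals ωSup c
  have hsup : ωSup (bc.map ⟨p i, hmonopi⟩) = ωSup c := by
    apply le_antisymm
    · apply ωSup_le
      intro n
      obtain ⟨m, hm, hmeq⟩ := Finset.exists_mem_eq_sup (Finset.range (n + 1))
        ⟨0, Finset.mem_range.2 (by omega)⟩ (fun m => a (k m))
      show p i (b n) ≤ _
      rw [hb]
      simp only
      rw [hmeq]
      calc p i (a (k m)) = c (k m) := by rw [← hkmem m, ha]
        _ ≤ ωSup c := le_ωSup c _
    · apply ωSup_le
      intro n
      calc c n ≤ c (k n) := c.monotone (hkmono.le_apply)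
        _ = p i (a (k n)) := by rw [← hkmem n, ha]
        _ ≤ p i (b n) := hmonopi (Finset.le_sup (f := fun m => a (k m)) (Finset.self_mem_range_succ n))
        _ ≤ _ := le_ωSup (bc.map ⟨p i, hmonopi⟩) n
  have : p i (ωSup bc) = ωSup c := by
    rw [(hp i).map_ωSup bc, hsup]
  exact Set.mem_iUnion.2 ⟨i, ⟨ωSup bc, this⟩⟩
end

section
/- Let D be a small directed partial order, let F be a functor from D to the category of ωcpos and continuous maps, let n ∈ ℕ, and suppose that each F(d) is equipped with a continuous n-ary operation σ_d : F(d)ⁿ → F(d) such that every connecting map F(δ) : F(d) → F(d') (for δ : d ≤ d') preserves the operations, i.e. F(δ)(σ_d(a)) = σ_{d'}(F(δ) ∘ a) for all a ∈ F(d)ⁿ. If (c_d : F(d) → C)_{d ∈ D} is a colimit cocone in the category of ωcpos and continuous maps, then there exists a unique continuous n-ary operation σ_C : Cⁿ → C such that every c_d preserves the operations, i.e. c_d(σ_d(a)) = σ_C(c_d ∘ a) for all d ∈ D and a ∈ F(d)ⁿ. -/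
open CategoryTheory CategoryTheory.Limits OmegaCompletePartialOrder

universe u

/-!
Continuous maps out of a colimit in ωCPO are determined by, and can be glued from, compatible
families of continuous maps on the stages: this is the case of one argument. With `n + 1`
arguments we curry, using that the continuous maps between ωcpos form an ωcpo: fixing the first
argument `x ∈ F d` and extending in the remaining `n` over the cofinal part of the diagram above
`d`, with values in `F d →𝒄 S`, yields a compatible family `x ↦ ((Fin n → C) →𝒄 S)`, which glues
in the first argument. Uniqueness goes by the same induction; directedness brings the stages
of a tuple to a common one.
-/

namespace OmegaCompletePartialOrder

variable {α β γ : Type*} [OmegaCompletePartialOrder α] [OmegaCompletePartialOrder β]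
  [OmegaCompletePartialOrder γ]

lemma ωScottContinuous_continuousHom_iff {f : α → β →𝒄 γ} :
    ωScottContinuous f ↔ ∀ b, ωScottContinuous (f · b) := by
  refine ⟨fun hf b => ContinuousHom.ωScottContinuous_apply hf ωScottContinuous.const,
    fun hf => ωScottContinuous.of_monotone_map_ωSup
      ⟨fun a a' h b => (hf b).monotone h, fun ch => ?_⟩⟩
  ext b
  exact (hf b).map_ωSup ch

@[fun_prop]
lemma ωScottContinuous.finCons {n : ℕ} {f : α → β} {g : α → Fin n → β}
    (hf : ωScottContinuous f) (hg : ωScottContinuous g) :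
    ωScottContinuous fun a => (Fin.cons (f a) (g a) : Fin (n + 1) → β) := by
  refine ωScottContinuous.of_apply₂ fun i => ?_
  refine Fin.cases ?_ (fun j => ?_) i
  · simpa using hf
  · simpa using hg.apply₂ j

end OmegaCompletePartialOrder

namespace ωCPO

section Colimit

variable {J : Type*} [Category J] {F : J ⥤ ωCPO.{u}} {c : Cocone F} {S : Type u}
  [OmegaCompletePartialOrder S]

lemma cocone_w_toFun {j j' : J} (f : j ⟶ j') (x : F.obj j) :
    (c.ι.app j').toFun ((F.map f).toFun x) = (c.ι.app j).toFun x :=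
  congrArg (fun g : F.obj j ⟶ c.pt => g.toFun x) (c.w f)

lemma funext_of_isColimit (hc : IsColimit c) {G G' : c.pt → S} (hG : ωScottContinuous G)
    (hG' : ωScottContinuous G')
    (h : ∀ j x, G ((c.ι.app j).toFun x) = G' ((c.ι.app j).toFun x)) : G = G' := by
  have := hc.hom_ext (W := ωCPO.of S) (f := ContinuousHom.ofFun G hG)
    (f' := ContinuousHom.ofFun G' hG') fun j => ContinuousHom.ext _ _ (h j)
  exact congrArg (fun g : c.pt ⟶ ωCPO.of S => g.toFun) this

lemma exists_lift_of_isColimit (hc : IsColimit c) (g : ∀ j, F.obj j → S)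
    (hg : ∀ j, ωScottContinuous (g j))
    (hcompat : ∀ j j' (f : j ⟶ j') x, g j' ((F.map f).toFun x) = g j x) :
    ∃ G : c.pt → S, ωScottContinuous G ∧ ∀ j x, G ((c.ι.app j).toFun x) = g j x := by
  let s : Cocone F :=
    { pt := ωCPO.of S
      ι :=
        { app := fun j => ContinuousHom.ofFun (g j) (hg j)
          naturality := fun j j' f => ContinuousHom.ext _ _ (hcompat j j' f) } }
  exact ⟨(hc.desc s).toFun, ContinuousHom.ωScottContinuous (hc.desc s),
    fun j x => congrArg (fun g : F.obj j ⟶ s.pt => g.toFun x) (hc.fac s j)⟩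

end Colimit

section Directed

variable {D : Type u} [Preorder D]

instance (d : D) [IsDirected D (· ≤ ·)] : IsDirected (Set.Ici d) (· ≤ ·) where
  directed e₁ e₂ :=
    let ⟨t, h₁, h₂⟩ := directed_of (· ≤ ·) e₁.1 e₂.1
    ⟨⟨t, e₁.2.trans h₁⟩, h₁, h₂⟩

instance (d : D) [IsDirected D (· ≤ ·)] :
    (Subtype.mono_coe (· ∈ Set.Ici d)).functor.Final := by
  rw [Monotone.final_functor_iff]
  intro e
  obtain ⟨t, hd, he⟩ := directed_of (· ≤ ·) d e
  exact ⟨⟨t, hd⟩, he⟩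

variable {F : D ⥤ ωCPO.{u}} {c : Cocone F} {S : Type u} [OmegaCompletePartialOrder S]

lemma map_toFun_map_toFun {d d' d'' : D} (f : d ⟶ d') (f' : d' ⟶ d'') (k : d ⟶ d'')
    (x : F.obj d) : (F.map f').toFun ((F.map f).toFun x) = (F.map k).toFun x := by
  rw [← Subsingleton.elim (f ≫ f') k, F.map_comp]
  rfl

lemma map_id_toFun {d : D} (f : d ⟶ d) (x : F.obj d) : (F.map f).toFun x = x := by
  rw [Subsingleton.elim f (𝟙 d), F.map_id]
  rfl

lemma map_toFun_finCons_map_toFun {d e e' : D} (f : e ⟶ e') (k : d ⟶ e) (k' : d ⟶ e')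
    (x : F.obj d) {n : ℕ} (a : Fin n → F.obj e) :
    (fun i => (F.map f).toFun ((Fin.cons ((F.map k).toFun x) a : Fin (n + 1) → F.obj e) i)) =
      Fin.cons ((F.map k').toFun x) fun i => (F.map f).toFun (a i) := by
  funext i
  refine Fin.cases ?_ (fun j => rfl) i
  exact map_toFun_map_toFun _ _ _ x

variable [IsDirected D (· ≤ ·)]

noncomputable def isColimitWhiskerIci (hc : IsColimit c) (d : D) :
    IsColimit (c.whisker (Subtype.mono_coe (· ∈ Set.Ici d)).functor) :=
  (Functor.Final.isColimitWhiskerEquiv _ _).symm hc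

lemma pi_funext_of_isColimit [Nonempty D] (hc : IsColimit c) {n : ℕ}
    {G G' : (Fin n → c.pt) → S} (hG : ωScottContinuous G) (hG' : ωScottContinuous G')
    (h : ∀ d (a : Fin n → F.obj d),
      G (fun i => (c.ι.app d).toFun (a i)) = G' (fun i => (c.ι.app d).toFun (a i))) :
    G = G' := by
  induction n with
  | zero =>
    funext y
    obtain ⟨d⟩ := ‹Nonempty D›
    rw [Subsingleton.elim y fun i => (c.ι.app d).toFun (Fin.elim0 i)]
    exact h d Fin.elim0
  | succ n ih =>
    have hcurry : (fun z => ContinuousHom.ofFun fun y => G (Fin.cons z y) :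
        c.pt → (Fin n → c.pt) →𝒄 S) =
        fun z => ContinuousHom.ofFun fun y => G' (Fin.cons z y) := by
      refine funext_of_isColimit hc
        (ωScottContinuous_continuousHom_iff.2 fun y => show ωScottContinuous (G <| Fin.cons · y)
          by fun_prop)
        (ωScottContinuous_continuousHom_iff.2 fun y => show ωScottContinuous (G' <| Fin.cons · y)
          by fun_prop) fun d x =>
          ContinuousHom.ext _ _ fun y => congrFun (ih (by fun_prop) (by fun_prop) fun e a => ?_) y
      obtain ⟨t, hdt, het⟩ := directed_of (· ≤ ·) d e
      have hlift : (Fin.cons ((c.ι.app d).toFun x) fun i => (c.ι.app e).toFun (a i)) =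
          fun i => (c.ι.app t).toFun
            ((Fin.cons ((F.map (homOfLE hdt)).toFun x) fun i => (F.map (homOfLE het)).toFun (a i) :
              Fin (n + 1) → F.obj t) i) := by
        funext i
        refine Fin.cases ?_ (fun j => ?_) i <;>
          simp only [Fin.cons_zero, Fin.cons_succ, cocone_w_toFun]
      simp only [ContinuousHom.ofFun_apply]
      rw [hlift]
      exact h t _
    funext z
    rw [← Fin.cons_self_tail z]
    exact ContinuousHom.congr_fun (congrFun hcurry (z 0)) (Fin.tail z)

theorem exists_pi_lift_of_isColimit [Nonempty D] (hc : IsColimit c) {n : ℕ}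
    (g : ∀ d, (Fin n → F.obj d) → S) (hg : ∀ d, ωScottContinuous (g d))
    (hcompat : ∀ d d' (f : d ⟶ d') (a : Fin n → F.obj d),
      g d' (fun i => (F.map f).toFun (a i)) = g d a) :
    ∃ G : (Fin n → c.pt) → S, ωScottContinuous G ∧
      ∀ d (a : Fin n → F.obj d), G (fun i => (c.ι.app d).toFun (a i)) = g d a := by
  induction n generalizing D S with
  | zero =>
    obtain ⟨d₀⟩ := ‹Nonempty D›
    refine ⟨fun _ => g d₀ Fin.elim0, ωScottContinuous.const, fun d a => ?_⟩
    obtain ⟨t, hd₀t, hdt⟩ := directed_of (· ≤ ·) d₀ d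
    rw [← hcompat d₀ t (homOfLE hd₀t), ← hcompat d t (homOfLE hdt)]
    exact congrArg (g t) (Subsingleton.elim _ _)
  | succ n ih =>
    have hg_cons : ∀ d (e : Set.Ici d) (a : Fin n → F.obj e.1),
        ωScottContinuous fun x : F.obj d => g e (Fin.cons ((F.map (homOfLE e.2)).toFun x) a) :=
      fun d e a =>
        (hg e).comp ((ContinuousHom.ωScottContinuous _).finCons ωScottContinuous.const)
    -- `H d y x` is to become `G (Fin.cons ((c.ι.app d).toFun x) y)`.
    choose H hH hH_spec using fun d => ih (isColimitWhiskerIci hc d)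
      (fun e a => ContinuousHom.ofFun _ (hg_cons d e a))
      (fun e => ωScottContinuous_continuousHom_iff.2 fun x =>
        show ωScottContinuous fun a => g e (Fin.cons ((F.map (homOfLE e.2)).toFun x) a)
        by fun_prop)
      (fun e e' f a => ContinuousHom.ext _ _ fun x => by
        simp only [ContinuousHom.ofFun_apply]
        rw [← hcompat e e' ((Subtype.mono_coe _).functor.map f)]
        exact congrArg (g e') (map_toFun_finCons_map_toFun _ _ _ x a).symm)
    have hH_compat : ∀ d d' (f : d ⟶ d') x y, H d' y ((F.map f).toFun x) = H d y x := by
      intro d d' f x y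
      refine congrFun (pi_funext_of_isColimit (isColimitWhiskerIci hc d')
        (G := fun y => H d' y ((F.map f).toFun x)) (G' := fun y => H d y x)
        (ωScottContinuous_continuousHom_iff.1 (hH d') _)
        (ωScottContinuous_continuousHom_iff.1 (hH d) _) fun e a => ?_) y
      refine (ContinuousHom.congr_fun (hH_spec d' e a) _).trans (Eq.trans ?_
        (ContinuousHom.congr_fun (hH_spec d ⟨e, (leOfHom f).trans e.2⟩ a) x).symm)
      simp only [ContinuousHom.ofFun_apply]
      rw [map_toFun_map_toFun f (homOfLE e.2) (homOfLE ((leOfHom f).trans e.2))]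
    obtain ⟨m, hm, hm_spec⟩ := exists_lift_of_isColimit hc
      (fun d x => ContinuousHom.ofFun (fun y : Fin n → c.pt => H d y x)
        (ωScottContinuous_continuousHom_iff.1 (hH d) x))
      (fun d => ωScottContinuous_continuousHom_iff.2 fun y =>
        ContinuousHom.ωScottContinuous (H d y))
      (fun d d' f x => ContinuousHom.ext _ _ (hH_compat d d' f x))
    refine ⟨fun z => m (z 0) fun i => z i.succ, by fun_prop, fun d a => ?_⟩
    show m ((c.ι.app d).toFun (a 0)) (fun i => (c.ι.app d).toFun (a i.succ)) = g d a
    rw [hm_spec]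
    refine (ContinuousHom.congr_fun (hH_spec d ⟨d, le_rfl⟩ (Fin.tail a)) (a 0)).trans ?_
    simp only [ContinuousHom.ofFun_apply]
    rw [map_id_toFun, Fin.cons_self_tail]

end Directed

end ωCPO

/-- Let `D` be a small directed partial order, `F : D ⥤ ωCPO` a diagram in the category of
ωcpos and continuous maps, and suppose each `F.obj d` carries a continuous `n`-ary operation
`σ d` such that all connecting maps preserve the operations.  If `(c.ι.app d : F.obj d ⟶ c.pt)`
is a colimit cocone of `F`, then there is a unique continuous `n`-ary operation `σC` on the
colimit `c.pt` such that every `c.ι.app d` preserves the operations. -/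
theorem colimit_unique_continuous_operation
    {D : Type u} [PartialOrder D] [Nonempty D] [IsDirected D (· ≤ ·)]
    (F : D ⥤ ωCPO.{u}) (n : ℕ)
    (σ : ∀ d : D, (Fin n → ↥(F.obj d)) → ↥(F.obj d))
    (hσ : ∀ d, ωScottContinuous (σ d))
    (hcompat : ∀ (d d' : D) (h : d ⟶ d') (a : Fin n → ↥(F.obj d)),
      (F.map h).toFun (σ d a) = σ d' (fun i => (F.map h).toFun (a i)))
    (c : Cocone F) (hc : IsColimit c) :
    ∃! σC : (Fin n → ↥c.pt) → ↥c.pt, ωScottContinuous σC ∧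
      ∀ (d : D) (a : Fin n → ↥(F.obj d)),
        (c.ι.app d).toFun (σ d a) = σC (fun i => (c.ι.app d).toFun (a i)) := by
  obtain ⟨σC, hσC, hσC_spec⟩ := ωCPO.exists_pi_lift_of_isColimit (S := c.pt) hc
    (fun d a => (c.ι.app d).toFun (σ d a))
    (fun d => (ContinuousHom.ωScottContinuous (c.ι.app d)).comp (hσ d))
    (fun d d' h a => by rw [← hcompat, ωCPO.cocone_w_toFun])
  refine ⟨σC, ⟨hσC, fun d a => (hσC_spec d a).symm⟩,
    fun σC' ⟨hσC', hσC'_spec⟩ => ?_⟩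
  exact ωCPO.pi_funext_of_isColimit hc hσC' hσC fun d a =>
    (hσC'_spec d a).symm.trans (hσC_spec d a).symm
end
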